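/- In the multi-jeep model with 1 + m jeeps (one crossing jeep and m helper jeeps) and any real x ≥ 1: for every plan with x tankloads in which the crossing jeep reaches a state with position d and each of the m helper jeeps is at position 0 in the final state, one has d ≤ F(x). In other words, helper jeeps that are all required to return to the desert border cannot help the crossing jeep get farther than a single jeep with the same amount of fuel. -/

import Mathlib

/-!
Let `g y` be the total distance driven above `y` by all jeeps. Fuel gets above `y ≥ 0` only
in the tank of a jeep crossing `y` upwards, at most one tankload per crossing, so `g y` is at most
the number `u` of upward crossings of `y`. As the helpers end at `0`, the number `w` of downward
crossings is at least `u - 1`, and the crossing jeep gives `u ≥ 1` for `y < d`. Between two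
consecutive positions ever occupied, `g` therefore decreases at rate `u + w ≥ 2 ⌈g⌉ - 1`, the
reciprocal of the slope of `F` at `g`. Hence `y + F (g y)` is nonincreasing on `[0, d]`, and
`d ≤ F (g 0) ≤ F x` because `g 0` is at most the total distance driven, which is at most `x`.
-/

/-- A state of the multi-jeep model with `N` jeeps: each jeep's position and
tank content, and a finitely supported function recording the fuel stored in
depots. -/
structure MultiState (N : ℕ) where
  pos : Fin N → ℝ
  tank : Fin N → ℝ
  depot : ℝ →₀ ℝ

/-- Admissible moves of the multi-jeep model: one jeep drives (consuming one
tankload of fuel per unit of distance), or fuel is moved between the tank of a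
jeep and the depot at its position, or between the tanks of two jeeps at the
same position; tank contents stay in `[0,1]` and depots stay nonnegative. -/
inductive MultiStep {N : ℕ} : MultiState N → MultiState N → Prop
  | drive (s : MultiState N) (i : Fin N) (p' : ℝ)
      (h : 0 ≤ s.tank i - |p' - s.pos i|) :
      MultiStep s ⟨Function.update s.pos i p',
        Function.update s.tank i (s.tank i - |p' - s.pos i|), s.depot⟩
  | transferDepot (s : MultiState N) (i : Fin N) (t' : ℝ) (D' : ℝ →₀ ℝ)
      (hcons : t' + D' (s.pos i) = s.tank i + s.depot (s.pos i))
      (ht0 : 0 ≤ t') (ht1 : t' ≤ 1)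
      (hD : ∀ q, 0 ≤ D' q)
      (heq : ∀ q, q ≠ s.pos i → D' q = s.depot q) :
      MultiStep s ⟨s.pos, Function.update s.tank i t', D'⟩
  | transferJeep (s : MultiState N) (i j : Fin N) (hij : i ≠ j)
      (hpos : s.pos i = s.pos j) (ti' tj' : ℝ)
      (hcons : ti' + tj' = s.tank i + s.tank j)
      (hi0 : 0 ≤ ti') (hi1 : ti' ≤ 1) (hj0 : 0 ≤ tj') (hj1 : tj' ≤ 1) :
      MultiStep s ⟨s.pos,
        Function.update (Function.update s.tank i ti') j tj', s.depot⟩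

/-- The initial state of a plan with `x` tankloads: all jeeps at position `0`
with empty tanks, and `x` tankloads of fuel at position `0`. -/
noncomputable def multiInit (N : ℕ) (x : ℝ) : MultiState N :=
  ⟨fun _ => 0, fun _ => 0, Finsupp.single 0 x⟩
/-- `F x = Σ_{k=1}^{⌈x⌉−1} 1/(2k−1) + (x − ⌈x⌉ + 1)/(2⌈x⌉ − 1)`. -/
noncomputable def F (x : ℝ) : ℝ :=
  (∑ k ∈ Finset.Icc 1 (⌈x⌉₊ - 1), 1 / (2 * (k : ℝ) - 1)) +
    (x - ⌈x⌉₊ + 1) / (2 * (⌈x⌉₊ : ℝ) - 1)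

open Finset

theorem Finset.le_of_le_on_gaps {α β : Type*} [LinearOrder α] [Preorder β] {Φ : α → β}
    (T : Finset α) {a b : α} (hab : a ≤ b)
    (h : ∀ u v, a ≤ u → u < v → v ≤ b → (∀ t ∈ T, t ∉ Set.Ioo u v) → Φ v ≤ Φ u) :
    Φ b ≤ Φ a := by
  classical
  induction T using Finset.induction_on generalizing a b with
  | empty =>
    rcases hab.eq_or_lt with rfl | hlt
    · exact le_rfl
    · exact h a b le_rfl hlt le_rfl (by simp)
  | insert t T _ ih =>
    by_cases ht : t ∈ Set.Ioo a b
    · have hbt : Φ b ≤ Φ t := ih ht.2.le fun u v hu huv hv hT =>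
        h u v (ht.1.le.trans hu) huv hv <|
          (forall_mem_insert _ _ _).2 ⟨fun htuv => htuv.1.not_ge hu, hT⟩
      have hta : Φ t ≤ Φ a := ih ht.1.le fun u v hu huv hv hT =>
        h u v hu huv (hv.trans ht.2.le) <|
          (forall_mem_insert _ _ _).2 ⟨fun htuv => htuv.2.not_ge hv, hT⟩
      exact hbt.trans hta
    · exact ih hab fun u v hu huv hv hT =>
        h u v hu huv hv <| (forall_mem_insert _ _ _).2
          ⟨fun htuv => ht ⟨hu.trans_lt htuv.1, htuv.2.trans_le hv⟩, hT⟩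

noncomputable def oddHarmonic (n : ℕ) : ℝ := ∑ k ∈ Icc 1 n, 1 / (2 * (k : ℝ) - 1)

theorem oddHarmonic_succ (n : ℕ) :
    oddHarmonic (n + 1) = oddHarmonic n + 1 / (2 * ((n : ℝ) + 1) - 1) := by
  rw [oddHarmonic, oddHarmonic, sum_Icc_succ_top (by omega), Nat.cast_succ]

/-- `F` continued by `0` on `(-∞, 0]`: the formula defining `F` gives the junk value `F 0 = -1`. -/
noncomputable def F₀ (x : ℝ) : ℝ := if x ≤ 0 then 0 else F x

theorem F₀_eq_F {x : ℝ} (hx : 0 < x) : F₀ x = F x := if_neg hx.not_ge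

theorem F₀_of_mem_Ioc {n : ℕ} (hn : 1 ≤ n) {t : ℝ} (ht : t ∈ Set.Ioc ((n : ℝ) - 1) n) :
    F₀ t = oddHarmonic (n - 1) + (t - n + 1) / (2 * (n : ℝ) - 1) := by
  have hceil : ⌈t⌉₊ = n := by
    rw [Nat.ceil_eq_iff (by omega), Nat.cast_pred hn]
    exact ht
  rw [F₀_eq_F (by linarith [ht.1, (Nat.one_le_cast (α := ℝ)).2 hn]), F, hceil, oddHarmonic]

theorem F₀_of_mem_Icc {n : ℕ} (hn : 1 ≤ n) {t : ℝ} (ht : t ∈ Set.Icc ((n : ℝ) - 1) n) :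
    F₀ t = oddHarmonic (n - 1) + (t - n + 1) / (2 * (n : ℝ) - 1) := by
  rcases ht.1.eq_or_lt with rfl | hlt
  · obtain ⟨m, rfl⟩ := Nat.exists_eq_add_of_le' hn
    rcases m with _ | m
    · simp [F₀, oddHarmonic]
    · rw [show ((m + 1 + 1 : ℕ) : ℝ) - 1 = ((m + 1 : ℕ) : ℝ) by push_cast; ring,
        F₀_of_mem_Ioc (by omega) ⟨by linarith, le_rfl⟩, Nat.add_sub_cancel, Nat.add_sub_cancel,
        oddHarmonic_succ]
      push_cast
      ring
  · exact F₀_of_mem_Ioc hn ⟨hlt, ht.2⟩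

theorem F₀_sub_of_mem_Icc {n : ℕ} (hn : 1 ≤ n) {u v : ℝ} (hu : u ∈ Set.Icc ((n : ℝ) - 1) n)
    (hv : v ∈ Set.Icc ((n : ℝ) - 1) n) : F₀ v - F₀ u = (v - u) / (2 * (n : ℝ) - 1) := by
  rw [F₀_of_mem_Icc hn hu, F₀_of_mem_Icc hn hv]
  ring

/-- The slope of `F₀` is `1 / (2n - 1)` on `[n - 1, n]`, which only decreases with `n`. -/
theorem sub_div_le_F₀_sub {a b : ℝ} (hb : 0 ≤ b) (hba : b ≤ a) :
    (a - b) / (2 * (max ⌈a⌉₊ 1 : ℕ) - 1) ≤ F₀ a - F₀ b := by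
  set M := max ⌈a⌉₊ 1
  have hM : (1 : ℝ) ≤ M := by exact_mod_cast le_max_right _ _
  suffices h : a / (2 * (M : ℝ) - 1) - F₀ a ≤ b / (2 * (M : ℝ) - 1) - F₀ b by
    rw [sub_div]
    linarith
  refine ((range (M + 1)).image (Nat.cast : ℕ → ℝ)).le_of_le_on_gaps
    (Φ := fun t => t / (2 * (M : ℝ) - 1) - F₀ t) hba ?_
  intro u v hu huv hv hgap
  set n := ⌈v⌉₊
  have hn : 1 ≤ n := Nat.ceil_pos.2 (by linarith)
  have hnM : n ≤ M := (Nat.ceil_mono hv).trans (le_max_left _ _)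
  have hnv : (n : ℝ) < v + 1 := Nat.ceil_lt_add_one (by linarith)
  have hvn : v ∈ Set.Icc ((n : ℝ) - 1) n := ⟨by linarith, Nat.le_ceil v⟩
  have hun : u ∈ Set.Icc ((n : ℝ) - 1) n := by
    refine ⟨not_lt.1 fun hlt => hgap (n - 1 : ℕ) ?_ ?_, by linarith [hvn.2]⟩
    · exact mem_image_of_mem _ (mem_range.2 (by omega))
    · rw [Nat.cast_pred hn]
      exact ⟨hlt, by linarith⟩
  have hslope : (v - u) / (2 * (M : ℝ) - 1) ≤ (v - u) / (2 * (n : ℝ) - 1) :=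
    div_le_div_of_nonneg_left (by linarith) (by linarith [(Nat.one_le_cast (α := ℝ)).2 hn])
      (by linarith [(Nat.cast_le (α := ℝ)).2 hnM])
  rw [sub_div] at hslope
  linarith [F₀_sub_of_mem_Icc hn hun hvn]

theorem monotoneOn_F₀ : MonotoneOn F₀ (Set.Ici 0) := fun b hb a _ hba => by
  have hM : (1 : ℝ) ≤ (max ⌈a⌉₊ 1 : ℕ) := by exact_mod_cast le_max_right _ _
  have := sub_div_le_F₀_sub hb hba
  have : 0 ≤ (a - b) / (2 * (max ⌈a⌉₊ 1 : ℕ) - 1) := div_nonneg (by linarith) (by linarith)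
  linarith

theorem F₀_nonneg {x : ℝ} (hx : 0 ≤ x) : 0 ≤ F₀ x := by
  simpa [F₀] using monotoneOn_F₀ (le_refl (0 : ℝ)) hx hx

/-- The length of the part of the segment between `a` and `b` that lies above `y`. -/
def lengthAbove (y a b : ℝ) : ℝ := |max y b - max y a|

noncomputable def upCross (y a b : ℝ) : ℕ := if a ≤ y ∧ y < b then 1 else 0

theorem lengthAbove_le_abs (y a b : ℝ) : lengthAbove y a b ≤ |b - a| := by
  simpa only [lengthAbove, max_comm y] using abs_max_sub_max_le_abs b a y

theorem lengthAbove_anti {y y' : ℝ} (h : y ≤ y') (a b : ℝ) :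
    lengthAbove y' a b ≤ lengthAbove y a b := by
  have hmax : ∀ t, max y' t = max y' (max y t) := fun t => by
    rw [← max_assoc, max_eq_left h]
  rw [lengthAbove, hmax a, hmax b, max_comm y', max_comm y' (max y a)]
  exact abs_max_sub_max_le_abs _ _ _

theorem upCross_sub_upCross (y a b : ℝ) :
    (upCross y a b : ℝ) - upCross y b a = (if y < b then 1 else 0) - (if y < a then 1 else 0) := by
  simp only [upCross, Nat.cast_ite, Nat.cast_one, Nat.cast_zero]
  grind

/-- A jeep driving from `a` to `b` with `t` tankloads burns above `y` only fuel it carried above `y`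
or brought there by crossing `y` upwards, at most one tankload. -/
theorem indicator_mul_sub_add_lengthAbove_le {y a b t : ℝ} (ht : t ≤ 1) (hab : |b - a| ≤ t) :
    (Set.Ioi y).indicator 1 b * (t - |b - a|) - (Set.Ioi y).indicator 1 a * t
      + lengthAbove y a b ≤ upCross y a b := by
  simp only [Set.indicator_apply, Set.mem_Ioi, Pi.one_apply, ite_mul, one_mul, zero_mul,
    lengthAbove, upCross, Nat.cast_ite, Nat.cast_one, Nat.cast_zero]
  grind

/-- A segment with endpoints outside `(a, b)` either covers `[a, b]`, crossing `a`, or misses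
`(a, b)`. -/
theorem mul_upCross_add_upCross_le {a b p q : ℝ} (hab : a < b) (hp : p ∉ Set.Ioo a b)
    (hq : q ∉ Set.Ioo a b) :
    (b - a) * ((upCross a p q : ℝ) + upCross a q p) ≤ lengthAbove a p q - lengthAbove b p q := by
  simp only [lengthAbove, upCross, Nat.cast_ite, Nat.cast_one, Nat.cast_zero, mul_add,
    mul_ite, mul_one, mul_zero]
  grind

theorem Fintype.sum_mul_update {ι : Type*} [Fintype ι] [DecidableEq ι] (c f : ι → ℝ) (i : ι)
    (b : ℝ) : ∑ j, c j * Function.update f i b j = ∑ j, c j * f j + c i * (b - f i) := by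
  simp only [Function.update_apply, mul_ite, sum_ite, filter_eq', filter_ne', mem_univ,
    if_true, sum_singleton, sum_erase_eq_sub]
  ring

namespace MultiState

variable {N : ℕ}

def Valid (s : MultiState N) : Prop :=
  (∀ i, 0 ≤ s.tank i ∧ s.tank i ≤ 1) ∧ ∀ q, 0 ≤ s.depot q

noncomputable def weightedFuel (w : ℝ → ℝ) (s : MultiState N) : ℝ :=
  ∑ i, w (s.pos i) * s.tank i + s.depot.sum fun q v => w q * v

theorem weightedFuel_nonneg {w : ℝ → ℝ} (hw : ∀ q, 0 ≤ w q) {s : MultiState N} (hs : s.Valid) :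
    0 ≤ s.weightedFuel w :=
  add_nonneg (sum_nonneg fun i _ => mul_nonneg (hw _) (hs.1 i).1)
    (sum_nonneg fun q _ => mul_nonneg (hw q) (hs.2 q))

end MultiState

theorem valid_multiInit (N : ℕ) {x : ℝ} (hx : 0 ≤ x) : (multiInit N x).Valid := by
  refine ⟨fun _ => ⟨le_rfl, zero_le_one⟩, fun q => ?_⟩
  simp only [multiInit, Finsupp.single_apply]
  split_ifs <;> simp [hx]

theorem weightedFuel_multiInit (N : ℕ) (w : ℝ → ℝ) (x : ℝ) :
    (multiInit N x).weightedFuel w = w 0 * x := by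
  simp [MultiState.weightedFuel, multiInit]

namespace MultiStep

open MultiState

variable {N : ℕ} {s s' : MultiState N}

theorem valid (h : MultiStep s s') (hs : s.Valid) : s'.Valid := by
  classical
  obtain ⟨htank, hdepot⟩ := hs
  cases h with
  | drive i p' h =>
    refine ⟨fun j => ?_, hdepot⟩
    rcases eq_or_ne j i with rfl | hj
    · simp only [Function.update_self]
      constructor <;> linarith [abs_nonneg (p' - s.pos j), (htank j).2]
    · simpa [hj] using htank j
  | transferDepot i t' D' _ ht0 ht1 hD _ =>
    refine ⟨fun j => ?_, hD⟩
    rcases eq_or_ne j i with rfl | hj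
    · simpa using ⟨ht0, ht1⟩
    · simpa [hj] using htank j
  | transferJeep i j _ _ ti' tj' _ hi0 hi1 hj0 hj1 =>
    refine ⟨fun l => ?_, hdepot⟩
    simp only [Function.update_apply]
    split_ifs
    exacts [⟨hj0, hj1⟩, ⟨hi0, hi1⟩, htank l]

theorem abs_pos_sub_le_tank (h : MultiStep s s') (hs : s.Valid) (i : Fin N) :
    |s'.pos i - s.pos i| ≤ s.tank i := by
  classical
  cases h with
  | drive j p' h =>
    rcases eq_or_ne i j with rfl | hi
    · simpa using h
    · simpa [hi] using (hs.1 i).1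
  | _ => simpa using (hs.1 i).1

theorem weightedFuel_eq (h : MultiStep s s') (w : ℝ → ℝ) :
    s'.weightedFuel w = s.weightedFuel w
      + ∑ i, (w (s'.pos i) * (s.tank i - |s'.pos i - s.pos i|) - w (s.pos i) * s.tank i) := by
  classical
  cases h with
  | drive i p' h =>
    have htank : ∀ j, Function.update s.tank i (s.tank i - |p' - s.pos i|) j
        = s.tank j - |Function.update s.pos i p' j - s.pos j| := fun j => by
      rcases eq_or_ne j i with rfl | hj <;> simp [*]
    simp only [weightedFuel, htank, sum_sub_distrib]
    ring
  | transferDepot i t' D' hcons _ _ _ heq =>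
    have hD' : D' = s.depot.update (s.pos i) (D' (s.pos i)) := by
      ext q
      rcases eq_or_ne q (s.pos i) with rfl | hq <;> simp [Finsupp.update_apply, *]
    have hsum := Finsupp.sum_update_add s.depot (s.pos i) (D' (s.pos i)) (fun q v => w q * v)
      (fun _ => mul_zero _) (fun _ _ _ => mul_add _ _ _)
    rw [← hD'] at hsum
    simp only [weightedFuel, Fintype.sum_mul_update, sub_self, abs_zero, sub_zero, sum_const_zero,
      add_zero]
    linear_combination hsum + w (s.pos i) * hcons
  | transferJeep i j hij hpos ti' tj' hcons _ _ _ _ =>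
    simp only [weightedFuel, Fintype.sum_mul_update, Function.update_of_ne hij.symm, hpos,
      sub_self, abs_zero, sub_zero, sum_const_zero, add_zero]
    linear_combination w (s.pos j) * hcons

theorem weightedFuel_indicator_add_le (h : MultiStep s s') (hs : s.Valid) (y : ℝ) :
    s'.weightedFuel ((Set.Ioi y).indicator 1) + ∑ i, lengthAbove y (s.pos i) (s'.pos i)
      ≤ s.weightedFuel ((Set.Ioi y).indicator 1) + ∑ i, (upCross y (s.pos i) (s'.pos i) : ℝ) := by
  have hjeep := fun i => indicator_mul_sub_add_lengthAbove_le (y := y) (hs.1 i).2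
    (h.abs_pos_sub_le_tank hs i)
  rw [h.weightedFuel_eq, add_assoc, ← sum_add_distrib]
  gcongr with i
  linarith [hjeep i]

theorem weightedFuel_one_add_sum_abs (h : MultiStep s s') :
    s'.weightedFuel 1 + ∑ i, |s'.pos i - s.pos i| = s.weightedFuel 1 := by
  simp only [h.weightedFuel_eq, Pi.one_apply, one_mul, sub_sub_cancel_left, sum_neg_distrib]
  ring

end MultiStep

theorem add_sum_range_le_of_succ_add_le {Φ c : ℕ → ℝ} {k : ℕ}
    (h : ∀ l < k, Φ (l + 1) + c l ≤ Φ l) : Φ k + ∑ l ∈ range k, c l ≤ Φ 0 := by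
  induction k with
  | zero => simp
  | succ k ih =>
    rw [sum_range_succ]
    linarith [ih fun l hl => h l (by omega), h k (by omega)]

theorem sum_range_upCross_sub_upCross (y : ℝ) (p : ℕ → ℝ) (n : ℕ) :
    ∑ l ∈ range n, ((upCross y (p l) (p (l + 1)) : ℝ) - upCross y (p (l + 1)) (p l))
      = (if y < p n then 1 else 0) - (if y < p 0 then 1 else 0) := by
  simp only [upCross_sub_upCross]
  exact sum_range_sub (fun l => if y < p l then (1 : ℝ) else 0) n

section Plan

open MultiState

variable {N : ℕ} (f : ℕ → MultiState N) (k : ℕ)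

noncomputable def travelAbove (y : ℝ) : ℝ :=
  ∑ l ∈ range k, ∑ i, lengthAbove y ((f l).pos i) ((f (l + 1)).pos i)

noncomputable def upCrossings (y : ℝ) : ℕ :=
  ∑ l ∈ range k, ∑ i, upCross y ((f l).pos i) ((f (l + 1)).pos i)

noncomputable def downCrossings (y : ℝ) : ℕ :=
  ∑ l ∈ range k, ∑ i, upCross y ((f (l + 1)).pos i) ((f l).pos i)

noncomputable def positions : Finset ℝ :=
  (range (k + 1) ×ˢ univ).image fun p : ℕ × Fin N => (f p.1).pos p.2

variable {f k}

theorem mem_positions {n : ℕ} (hn : n ≤ k) (i : Fin N) : (f n).pos i ∈ positions f k :=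
  mem_image.2 ⟨(n, i), mem_product.2 ⟨mem_range.2 (by omega), mem_univ i⟩, rfl⟩

theorem travelAbove_nonneg (y : ℝ) : 0 ≤ travelAbove f k y :=
  sum_nonneg fun _ _ => sum_nonneg fun _ _ => abs_nonneg _

theorem travelAbove_anti {y y' : ℝ} (h : y ≤ y') : travelAbove f k y' ≤ travelAbove f k y :=
  sum_le_sum fun _ _ => sum_le_sum fun _ _ => lengthAbove_anti h _ _

theorem valid_of_plan (hstep : ∀ j < k, MultiStep (f j) (f (j + 1))) (h0 : (f 0).Valid)
    {n : ℕ} (hn : n ≤ k) : (f n).Valid := by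
  induction n with
  | zero => exact h0
  | succ n ih => exact (hstep n (by omega)).valid (ih (by omega))

theorem travelAbove_le_upCrossings_add (hstep : ∀ j < k, MultiStep (f j) (f (j + 1)))
    (h0 : (f 0).Valid) (y : ℝ) :
    travelAbove f k y ≤ upCrossings f k y + (f 0).weightedFuel ((Set.Ioi y).indicator 1) := by
  have := add_sum_range_le_of_succ_add_le
    (Φ := fun l => (f l).weightedFuel ((Set.Ioi y).indicator 1))
    (c := fun l => ∑ i, lengthAbove y ((f l).pos i) ((f (l + 1)).pos i)
      - ∑ i, (upCross y ((f l).pos i) ((f (l + 1)).pos i) : ℝ)) (k := k) fun l hl => by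
    linarith [(hstep l hl).weightedFuel_indicator_add_le (valid_of_plan hstep h0 hl.le) y]
  have hk := weightedFuel_nonneg (w := (Set.Ioi y).indicator 1)
    (Set.indicator_nonneg fun _ _ => zero_le_one) (valid_of_plan hstep h0 le_rfl)
  simp only [sum_sub_distrib] at this
  push_cast [travelAbove, upCrossings]
  linarith

theorem travelAbove_le_weightedFuel_one (hstep : ∀ j < k, MultiStep (f j) (f (j + 1)))
    (h0 : (f 0).Valid) (y : ℝ) : travelAbove f k y ≤ (f 0).weightedFuel 1 := by
  have := add_sum_range_le_of_succ_add_le (Φ := fun l => (f l).weightedFuel 1)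
    (c := fun l => ∑ i, |(f (l + 1)).pos i - (f l).pos i|) (k := k) fun l hl =>
    ((hstep l hl).weightedFuel_one_add_sum_abs).le
  have hk := weightedFuel_nonneg (w := 1) (fun _ => zero_le_one) (valid_of_plan hstep h0 le_rfl)
  have hlen : travelAbove f k y ≤ ∑ l ∈ range k, ∑ i, |(f (l + 1)).pos i - (f l).pos i| :=
    sum_le_sum fun _ _ => sum_le_sum fun _ _ => lengthAbove_le_abs _ _ _
  linarith

theorem upCrossings_sub_downCrossings (y : ℝ) :
    (upCrossings f k y : ℝ) - downCrossings f k y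
      = ∑ i, ((if y < (f k).pos i then 1 else 0) - (if y < (f 0).pos i then 1 else 0)) := by
  push_cast [upCrossings, downCrossings]
  rw [sum_comm, sum_comm (s := range k), ← sum_sub_distrib]
  refine sum_congr rfl fun i _ => ?_
  rw [← sum_sub_distrib]
  exact sum_range_upCross_sub_upCross y (fun n => (f n).pos i) k

theorem upCrossings_le_downCrossings_add_one {y : ℝ} (i₀ : Fin N)
    (h0 : ∀ i, (f 0).pos i ≤ y) (hk : ∀ i ≠ i₀, (f k).pos i ≤ y) :
    (upCrossings f k y : ℝ) ≤ downCrossings f k y + 1 := by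
  have h := upCrossings_sub_downCrossings (f := f) (k := k) y
  rw [Fintype.sum_eq_single i₀ fun i hi => by simp [(hk i hi).not_gt, (h0 i).not_gt]] at h
  simp only [(h0 i₀).not_gt, if_false, sub_zero] at h
  split_ifs at h <;> linarith

theorem one_le_upCrossings {j : ℕ} (hjk : j ≤ k) {i : Fin N} {y : ℝ} (h0 : (f 0).pos i ≤ y)
    (hj : y < (f j).pos i) : 1 ≤ upCrossings f k y := by
  have htel := sum_range_upCross_sub_upCross y (fun n => (f n).pos i) j
  simp only [hj, h0.not_gt, if_true, if_false, sub_zero] at htel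
  have hjeep : 1 ≤ ∑ l ∈ range j, upCross y ((f l).pos i) ((f (l + 1)).pos i) := by
    have : (1 : ℝ) ≤ ∑ l ∈ range j, (upCross y ((f l).pos i) ((f (l + 1)).pos i) : ℝ) := by
      rw [← htel]
      exact sum_le_sum fun _ _ => sub_le_self _ (Nat.cast_nonneg _)
    exact_mod_cast this
  calc 1 ≤ ∑ l ∈ range j, upCross y ((f l).pos i) ((f (l + 1)).pos i) := hjeep
    _ ≤ ∑ l ∈ range k, upCross y ((f l).pos i) ((f (l + 1)).pos i) :=
      sum_le_sum_of_subset (range_subset_range.2 hjk)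
    _ ≤ upCrossings f k y :=
      sum_le_sum fun l _ => single_le_sum (f := fun i => upCross y ((f l).pos i) _)
        (fun _ _ => Nat.zero_le _) (mem_univ i)

theorem mul_add_le_travelAbove_sub {a b : ℝ} (hab : a < b)
    (hgap : ∀ t ∈ positions f k, t ∉ Set.Ioo a b) :
    (b - a) * ((upCrossings f k a : ℝ) + downCrossings f k a)
      ≤ travelAbove f k a - travelAbove f k b := by
  push_cast [upCrossings, downCrossings, travelAbove]
  rw [← sum_add_distrib, mul_sum, ← sum_sub_distrib]
  refine sum_le_sum fun l hl => ?_
  rw [← sum_add_distrib, mul_sum, ← sum_sub_distrib]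
  have hl := mem_range.1 hl
  exact sum_le_sum fun i _ => mul_upCross_add_upCross_le hab
    (hgap _ (mem_positions hl.le i)) (hgap _ (mem_positions hl i))

end Plan

/-- Here `u + w ≥ 2 ⌈ga⌉ - 1`, and `1 / (2 ⌈ga⌉ - 1)` bounds the slope of `F₀` on `[gb, ga]`
from below. -/
theorem le_F₀_sub_F₀ {u w : ℕ} {h ga gb : ℝ} (hh : 0 ≤ h) (hgb : 0 ≤ gb) (hg : gb ≤ ga)
    (hu : ga ≤ u) (hu1 : 1 ≤ u) (huw : (u : ℝ) ≤ w + 1) (hcover : h * (u + w) ≤ ga - gb) :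
    h ≤ F₀ ga - F₀ gb := by
  have hM : max ⌈ga⌉₊ 1 ≤ u := max_le (Nat.ceil_le.2 hu) hu1
  have hM1 : (1 : ℝ) ≤ (max ⌈ga⌉₊ 1 : ℕ) := by exact_mod_cast le_max_right _ _
  have hMu : (2 * (max ⌈ga⌉₊ 1 : ℕ) - 1 : ℝ) ≤ u + w := by
    have : ((max ⌈ga⌉₊ 1 : ℕ) : ℝ) ≤ u := by exact_mod_cast hM
    linarith
  calc h ≤ (ga - gb) / (2 * (max ⌈ga⌉₊ 1 : ℕ) - 1) := by
        rw [le_div_iff₀ (by linarith)]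
        nlinarith
    _ ≤ F₀ ga - F₀ gb := sub_div_le_F₀_sub hgb hg

/-- With `1 + m` jeeps (jeep `0` is the crossing jeep and the other `m` are
helpers) and `x ≥ 1` tankloads: for every plan in which the crossing jeep
reaches a state with position `d` and all helper jeeps are at position `0` in
the final state, `d ≤ F x`. -/
theorem multi_helpers_return_bound (m : ℕ) (x : ℝ) (hx : 1 ≤ x) (d : ℝ)
    (k : ℕ) (f : ℕ → MultiState (m + 1))
    (h0 : f 0 = multiInit (m + 1) x)
    (hstep : ∀ j < k, MultiStep (f j) (f (j + 1)))
    (hcross : ∃ j ≤ k, (f j).pos 0 = d)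
    (hhelpers : ∀ i : Fin (m + 1), i ≠ 0 → (f k).pos i = 0) :
    d ≤ F x := by
  obtain ⟨j, hjk, hjd⟩ := hcross
  have hx0 : 0 < x := by linarith
  rw [← F₀_eq_F hx0]
  rcases le_or_gt d 0 with hd | hd
  · exact hd.trans (F₀_nonneg hx0.le)
  have hvalid : (f 0).Valid := h0 ▸ valid_multiInit _ hx0.le
  have hstart : ∀ i, (f 0).pos i = 0 := fun i => by rw [h0]; rfl
  have hgap : ∀ a b, 0 ≤ a → a < b → b ≤ d → (∀ t ∈ positions f k, t ∉ Set.Ioo a b) →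
      b + F₀ (travelAbove f k b) ≤ a + F₀ (travelAbove f k a) := by
    intro a b ha hab hbd hgap
    have hfuel := travelAbove_le_upCrossings_add hstep hvalid a
    rw [h0, weightedFuel_multiInit, Set.indicator_of_notMem (by simpa using ha), zero_mul,
      add_zero] at hfuel
    have hup := one_le_upCrossings hjk ((hstart 0).trans_le ha) (hjd ▸ hab.trans_le hbd)
    have hdown := upCrossings_le_downCrossings_add_one (f := f) (k := k) 0
      (fun i => (hstart i).trans_le ha) (fun i hi => (hhelpers i hi).trans_le ha)
    linarith [le_F₀_sub_F₀ (sub_nonneg.2 hab.le) (travelAbove_nonneg b) (travelAbove_anti hab.le)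
      hfuel hup hdown (mul_add_le_travelAbove_sub hab hgap)]
  have hchain := (positions f k).le_of_le_on_gaps (Φ := fun y => y + F₀ (travelAbove f k y))
    hd.le hgap
  have hx := travelAbove_le_weightedFuel_one hstep hvalid 0
  rw [h0, weightedFuel_multiInit, Pi.one_apply, one_mul] at hx
  linarith [F₀_nonneg (travelAbove_nonneg (f := f) (k := k) d),
    monotoneOn_F₀ (travelAbove_nonneg 0) hx0.le hx]
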